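/- arXiv:1708.00610 — 3 statements merged into one kernel-verified Lean document; each statement's English description precedes it below -/
import Mathlib

section
/- Let H be the set of n×n upper triangular matrices over R_ε of the form h^θ(a) with diagonal entries e^{iθ} and (j,j+k)-entry a_k ε^k for 1 ≤ k ≤ n−1, where θ ∈ ℝ and a = (a₁,...,a_{n−1}) ∈ ℂ^{n−1}. Then H is a subgroup of the unit group of M_n(R_ε). -/
/-! Let `c` be the coefficient sequence of `h^θ(a)`: `c 0 = e^{iθ}` and `c k = a k` for `k ≥ 1`.
Since `ε z = conj z ε`, a product of such upper triangular Toeplitz matrices is again one, with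
coefficients given by the twisted convolution `∑ c k * conj^[k] (d (m - k))`; its leading
coefficient `c 0 * d 0` again has modulus one. As `c 0 ≠ 0`, the equation `c ⋆ d = δ₀` can be
solved for `d` coefficient by coefficient, which gives a right inverse in `H`. Applying this to
the right inverse as well, associativity of the matrix product makes it two-sided. -/

/- R_ε := ℂ ⊕ ℂε, encoded as ℂ × ℂ. H is the set of upper triangular matrices
   h^θ(a) over R_ε with diagonal entries e^{iθ} and (j, j+k)-entry a_k ε^k. -/
noncomputable section
open Complex

abbrev Reps : Type := ℂ × ℂ

def Rmul (x y : Reps) : Reps :=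
  (x.1 * y.1 + x.2 * (starRingEnd ℂ) y.2, x.2 * (starRingEnd ℂ) y.1 + x.1 * y.2)

def Rone : Reps := (1, 0)

def Mmul {n : ℕ} (A B : Matrix (Fin n) (Fin n) Reps) : Matrix (Fin n) (Fin n) Reps :=
  fun i j => ∑ k : Fin n, Rmul (A i k) (B k j)

def MoneR (n : ℕ) : Matrix (Fin n) (Fin n) Reps :=
  fun i j => if i = j then Rone else 0

/-- a·ε^m ∈ R_ε : equals (a,0) if m is even (ε^m = 1) and (0,a) if m is odd (ε^m = ε) -/
def epsPow (a : ℂ) (m : ℕ) : Reps := if m % 2 = 0 then (a, 0) else (0, a)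

/-- the matrix h^θ(a): diagonal e^{iθ}, (i,j)-entry a_{j-i} ε^{j-i} above the diagonal -/
def hmat (n : ℕ) (θ : ℝ) (a : ℕ → ℂ) : Matrix (Fin n) (Fin n) Reps :=
  fun i j =>
    if i = j then (Complex.exp (θ * I), 0)
    else if (i : ℕ) < (j : ℕ) then epsPow (a ((j : ℕ) - (i : ℕ))) ((j : ℕ) - (i : ℕ))
    else 0

def Hset (n : ℕ) : Set (Matrix (Fin n) (Fin n) Reps) :=
  {A | ∃ (θ : ℝ) (a : ℕ → ℂ), A = hmat n θ a}

open Finset ComplexConjugate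

lemma Rmul_zero_left (y : Reps) : Rmul 0 y = 0 := by
  simp [Rmul, Prod.ext_iff]

lemma Rmul_zero_right (x : Reps) : Rmul x 0 = 0 := by
  simp [Rmul, Prod.ext_iff]

lemma Rmul_Rone (x : Reps) : Rmul x Rone = x := by
  simp [Rmul, Rone]

lemma Rone_Rmul (x : Reps) : Rmul Rone x = x := by
  simp [Rmul, Rone]

lemma Rmul_add_left (x y z : Reps) : Rmul (x + y) z = Rmul x z + Rmul y z := by
  simp only [Rmul, Prod.fst_add, Prod.snd_add, Prod.mk_add_mk]
  congr 1 <;> ring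

lemma Rmul_add_right (x y z : Reps) : Rmul x (y + z) = Rmul x y + Rmul x z := by
  simp only [Rmul, Prod.fst_add, Prod.snd_add, map_add, Prod.mk_add_mk]
  congr 1 <;> ring

lemma Rmul_assoc (x y z : Reps) : Rmul (Rmul x y) z = Rmul x (Rmul y z) := by
  simp only [Rmul, map_add, map_mul, Complex.conj_conj]
  congr 1 <;> ring

lemma Rmul_sum_left {ι : Type*} (s : Finset ι) (f : ι → Reps) (y : Reps) :
    Rmul (∑ i ∈ s, f i) y = ∑ i ∈ s, Rmul (f i) y :=
  map_sum (AddMonoidHom.mk' (Rmul · y) (Rmul_add_left · · y)) f s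

lemma Rmul_sum_right {ι : Type*} (s : Finset ι) (f : ι → Reps) (x : Reps) :
    Rmul x (∑ i ∈ s, f i) = ∑ i ∈ s, Rmul x (f i) :=
  map_sum (AddMonoidHom.mk' (Rmul x) (Rmul_add_right x)) f s

section Mmul

variable {n : ℕ}

lemma Mmul_assoc (A B C : Matrix (Fin n) (Fin n) Reps) :
    Mmul (Mmul A B) C = Mmul A (Mmul B C) := by
  funext i j
  simp only [Mmul, Rmul_sum_left, Rmul_sum_right, Rmul_assoc]
  exact sum_comm

lemma Mmul_MoneR (A : Matrix (Fin n) (Fin n) Reps) : Mmul A (MoneR n) = A := by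
  funext i j
  simp [Mmul, MoneR, apply_ite, Rmul_Rone, Rmul_zero_right]

lemma MoneR_Mmul (A : Matrix (Fin n) (Fin n) Reps) : Mmul (MoneR n) A = A := by
  funext i j
  simp only [Mmul, MoneR]
  rw [sum_eq_single i (fun k _ hki => by simp [Ne.symm hki, Rmul_zero_left]) (by simp)]
  simp [Rone_Rmul]

lemma eq_of_Mmul_eq_MoneR {A B C : Matrix (Fin n) (Fin n) Reps}
    (hAB : Mmul A B = MoneR n) (hBC : Mmul B C = MoneR n) : A = C :=
  calc A = Mmul A (Mmul B C) := by rw [hBC, Mmul_MoneR]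
    _ = Mmul (Mmul A B) C := (Mmul_assoc A B C).symm
    _ = C := by rw [hAB, MoneR_Mmul]

end Mmul

lemma conj_iterate (k : ℕ) (z : ℂ) : conj^[k] z = if k % 2 = 0 then z else conj z := by
  have hconj : Function.Involutive (conj : ℂ → ℂ) := Complex.conj_conj
  rcases Nat.even_or_odd k with hk | hk
  · rw [hconj.iterate_even hk, if_pos (Nat.even_iff.1 hk), id]
  · rw [hconj.iterate_odd hk, if_neg (by rw [Nat.odd_iff.1 hk]; decide)]

lemma epsPow_zero (m : ℕ) : epsPow 0 m = 0 := by
  unfold epsPow; split <;> rfl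

lemma epsPow_add (a b : ℂ) (m : ℕ) : epsPow (a + b) m = epsPow a m + epsPow b m := by
  unfold epsPow; split <;> simp

lemma epsPow_sum {ι : Type*} (s : Finset ι) (f : ι → ℂ) (m : ℕ) :
    epsPow (∑ t ∈ s, f t) m = ∑ t ∈ s, epsPow (f t) m :=
  map_sum (AddMonoidHom.mk' (epsPow · m) (epsPow_add · · m)) f s

-- `ε^m b = conj^[m] b ε^m`
lemma Rmul_epsPow (a b : ℂ) (m l : ℕ) :
    Rmul (epsPow a m) (epsPow b l) = epsPow (a * conj^[m] b) (m + l) := by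
  rcases Nat.mod_two_eq_zero_or_one m with hm | hm <;>
    rcases Nat.mod_two_eq_zero_or_one l with hl | hl <;>
      simp [epsPow, Rmul, conj_iterate, Nat.add_mod, hm, hl, mul_comm]

lemma Fin.sum_ite_le_le_eq_sum_range {M : Type*} [AddCommMonoid M] {n : ℕ} (f : ℕ → M)
    (i j : Fin n) (hij : (i : ℕ) ≤ j) :
    ∑ k : Fin n, (if (i : ℕ) ≤ k ∧ (k : ℕ) ≤ j then f k else 0) =
      ∑ t ∈ range (j - i + 1), f (i + t) := by
  have hIco : (range n).filter (fun k => (i : ℕ) ≤ k ∧ k ≤ j) = Ico (i : ℕ) (j + 1) := by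
    ext k
    simp only [mem_filter, mem_range, mem_Ico]
    omega
  rw [Fin.sum_univ_eq_sum_range (fun k => if (i : ℕ) ≤ k ∧ k ≤ j then f k else 0), ← sum_filter,
    hIco, sum_Ico_eq_sum_range, Nat.sub_add_comm hij]

def upperToeplitz (n : ℕ) (c : ℕ → ℂ) : Matrix (Fin n) (Fin n) Reps :=
  fun i j => if (i : ℕ) ≤ j then epsPow (c (j - i)) (j - i) else 0

def twistedConv (c d : ℕ → ℂ) (m : ℕ) : ℂ :=
  ∑ k ∈ range (m + 1), c k * conj^[k] (d (m - k))

section upperToeplitz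

variable {n : ℕ}

lemma Rmul_upperToeplitz_apply (c d : ℕ → ℂ) (i k j : Fin n) :
    Rmul (upperToeplitz n c i k) (upperToeplitz n d k j) =
      if (i : ℕ) ≤ k ∧ (k : ℕ) ≤ j then
        epsPow (c (k - i) * conj^[k - i] (d (j - k))) (j - i)
      else 0 := by
  unfold upperToeplitz
  by_cases hik : (i : ℕ) ≤ k <;> by_cases hkj : (k : ℕ) ≤ j <;>
    simp only [hik, hkj, and_self, and_true, true_and, if_true, if_false,
      Rmul_zero_left, Rmul_zero_right, Rmul_epsPow]
  rw [show (k : ℕ) - i + (j - k) = j - i by omega]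

lemma Mmul_upperToeplitz (c d : ℕ → ℂ) :
    Mmul (upperToeplitz n c) (upperToeplitz n d) = upperToeplitz n (twistedConv c d) := by
  funext i j
  simp only [Mmul, Rmul_upperToeplitz_apply]
  dsimp only [upperToeplitz]
  by_cases hij : (i : ℕ) ≤ j
  · rw [Fin.sum_ite_le_le_eq_sum_range
      (fun k => epsPow (c (k - i) * conj^[k - i] (d (j - k))) (j - i)) i j hij,
      if_pos hij, twistedConv, epsPow_sum]
    refine sum_congr rfl fun t _ => ?_
    rw [Nat.add_sub_cancel_left, Nat.sub_add_eq]
  · rw [if_neg hij]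
    exact sum_eq_zero fun k _ => if_neg (by omega)

lemma upperToeplitz_single_zero_one : upperToeplitz n (Pi.single 0 1) = MoneR n := by
  funext i j
  unfold upperToeplitz MoneR
  by_cases hij : i = j
  · simp [hij, epsPow, Rone]
  · have hji : (j : ℕ) - i ≠ 0 ∨ ¬ (i : ℕ) ≤ j := by
      have := Fin.val_injective.ne hij
      omega
    rcases hji with h | h <;> simp [hij, h, epsPow_zero]

lemma upperToeplitz_update_zero_exp (θ : ℝ) (a : ℕ → ℂ) :
    upperToeplitz n (Function.update a 0 (exp (θ * I))) = hmat n θ a := by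
  funext i j
  unfold upperToeplitz hmat
  by_cases hij : i = j
  · simp [hij, epsPow]
  · have hle : (i : ℕ) ≤ j ↔ (i : ℕ) < j := by
      have := Fin.val_injective.ne hij
      omega
    simp only [hij, if_false, hle]
    split_ifs with hlt
    · rw [Function.update_of_ne (by omega)]
    · rfl

end upperToeplitz

lemma mem_Hset_iff {n : ℕ} {A : Matrix (Fin n) (Fin n) Reps} :
    A ∈ Hset n ↔ ∃ c : ℕ → ℂ, ‖c 0‖ = 1 ∧ A = upperToeplitz n c := by
  constructor
  · rintro ⟨θ, a, rfl⟩
    exact ⟨_, by simp [norm_exp_ofReal_mul_I], (upperToeplitz_update_zero_exp θ a).symm⟩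
  · rintro ⟨c, hc, rfl⟩
    refine ⟨arg (c 0), c, ?_⟩
    have hpolar : exp (arg (c 0) * I) = c 0 := by
      simpa [hc] using norm_mul_exp_arg_mul_I (c 0)
    rw [← upperToeplitz_update_zero_exp, hpolar, Function.update_eq_self]

lemma twistedConv_zero (c d : ℕ → ℂ) : twistedConv c d 0 = c 0 * d 0 := by
  simp [twistedConv]

def twistedInv (c : ℕ → ℂ) : ℕ → ℂ
  | 0 => (c 0)⁻¹
  | m + 1 => -(c 0)⁻¹ * ∑ k ∈ range (m + 1), c (k + 1) * conj^[k + 1] (twistedInv c (m - k))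
decreasing_by omega

lemma twistedConv_twistedInv {c : ℕ → ℂ} (hc : c 0 ≠ 0) :
    twistedConv c (twistedInv c) = Pi.single 0 1 := by
  funext m
  cases m with
  | zero => simp [twistedConv_zero, twistedInv, hc]
  | succ m =>
    rw [twistedConv, sum_range_succ', Nat.sub_zero, twistedInv]
    simp only [Nat.add_sub_add_right, Function.iterate_zero, id, Pi.single_apply,
      Nat.succ_ne_zero, if_false]
    field_simp
    ring

lemma Mmul_upperToeplitz_twistedInv {n : ℕ} {c : ℕ → ℂ} (hc : c 0 ≠ 0) :
    Mmul (upperToeplitz n c) (upperToeplitz n (twistedInv c)) = MoneR n := by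
  rw [Mmul_upperToeplitz, twistedConv_twistedInv hc, upperToeplitz_single_zero_one]

/-- H is a subgroup of the unit group of M_n(R_ε): it contains the identity, is
closed under multiplication, and every element has an inverse lying in H. -/
theorem stmt8 (n : ℕ) :
    MoneR n ∈ Hset n ∧
    (∀ A ∈ Hset n, ∀ B ∈ Hset n, Mmul A B ∈ Hset n) ∧
    (∀ A ∈ Hset n, ∃ B ∈ Hset n, Mmul A B = MoneR n ∧ Mmul B A = MoneR n) := by
  refine ⟨mem_Hset_iff.2 ⟨Pi.single 0 1, by simp, upperToeplitz_single_zero_one.symm⟩, ?_, ?_⟩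
  · rintro A hA B hB
    obtain ⟨c, hc, rfl⟩ := mem_Hset_iff.1 hA
    obtain ⟨d, hd, rfl⟩ := mem_Hset_iff.1 hB
    exact mem_Hset_iff.2 ⟨twistedConv c d, by simp [twistedConv_zero, hc, hd],
      Mmul_upperToeplitz c d⟩
  · intro A hA
    obtain ⟨c, hc, rfl⟩ := mem_Hset_iff.1 hA
    have hinv : ‖twistedInv c 0‖ = 1 := by simp [twistedInv, hc]
    have hAB := Mmul_upperToeplitz_twistedInv (n := n) (norm_ne_zero_iff.1 (hc ▸ one_ne_zero))
    have hBC := Mmul_upperToeplitz_twistedInv (n := n) (norm_ne_zero_iff.1 (hinv ▸ one_ne_zero))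
    refine ⟨_, mem_Hset_iff.2 ⟨_, hinv, rfl⟩, hAB, ?_⟩
    rwa [eq_of_Mmul_eq_MoneR hAB hBC]
end
end

section
/- For each j ∈ {1,...,n}, the group H acts transitively on the set Y_{2j−1} := {[z] ∈ (ℂⁿ∖{0})/ℝ^× : z_{j+1} = ⋯ = z_n = 0, z_j ≠ 0}, where H acts on ℂⁿ by matrix multiplication using the R_ε-action on ℂ and ℝ^× acts by real scalar multiplication. -/
noncomputable section
open Complex

def act (x : Reps) (z : ℂ) : ℂ := x.1 * z + x.2 * (starRingEnd ℂ) z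

def Mact {n : ℕ} (A : Matrix (Fin n) (Fin n) Reps) (v : Fin n → ℂ) : Fin n → ℂ :=
  fun i => ∑ k : Fin n, act (A i k) (v k)

/-- z represents a point of Y_{2j−1} ⊂ (ℂⁿ∖{0})/ℝ^×, i.e. z_j ≠ 0 and z_k = 0 for k > j -/
def inY {n : ℕ} (j : Fin n) (z : Fin n → ℂ) : Prop :=
  z j ≠ 0 ∧ ∀ k : Fin n, j < k → z k = 0

/-!
Row `i` of `hmat n θ a` applied to `z` is `exp (θ I) zᵢ + ∑_{k > i} a_{k-i} ε^{k-i} z_k`. When `z`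
vanishes beyond `j`, the rows `i ≥ j` only see the phase, which together with a real scalar `t`
matches `z_j` to `w_j`. The rows `i < j` form a triangular system in `a₁, …, a_j`: row `j - d`
involves `a_d` only through `a_d ε^d z_j`, and `z_j ≠ 0`, so forward substitution solves it.
-/
theorem exists_forall_eq_of_lowerTriangular {K : Type*} [Field K] (N : ℕ)
    (F : ℕ → (ℕ → K) → K) (c y : ℕ → K) (hc : ∀ d < N, c d ≠ 0)
    (hF : ∀ d < N, ∀ a b : ℕ → K, (∀ e < d, a e = b e) → F d a - F d b = (a d - b d) * c d) :
    ∃ a : ℕ → K, ∀ d < N, F d a = y d := by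
  induction N with
  | zero => exact ⟨0, fun d hd => absurd hd d.not_lt_zero⟩
  | succ N ih =>
    obtain ⟨a, ha⟩ := ih (fun d hd => hc d (by omega)) (fun d hd => hF d (by omega))
    set a' := Function.update a N (a N + (y N - F N a) / c N)
    have h_below : ∀ e < N, a' e = a e := fun e he => Function.update_of_ne he.ne _ _
    have h_at : a' N = a N + (y N - F N a) / c N := Function.update_self _ _ _
    refine ⟨a', fun d hd => ?_⟩
    rcases Nat.lt_succ_iff_lt_or_eq.1 hd with hd | rfl
    · have h := hF d (by omega) a' a fun e he => h_below e (he.trans hd)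
      rw [h_below d hd, sub_self, zero_mul, sub_eq_zero] at h
      rw [h, ha d hd]
    · have h := hF d (by omega) a' a h_below
      rw [h_at, add_sub_cancel_left, div_mul_cancel₀ _ (hc d (by omega)),
        sub_eq_iff_eq_add] at h
      rw [h, sub_add_cancel]

theorem exists_exp_mul_I_mul_eq_real_mul {u v : ℂ} (hu : u ≠ 0) (hv : v ≠ 0) :
    ∃ θ t : ℝ, t ≠ 0 ∧ exp (θ * I) * u = t * v := by
  refine ⟨(v / u).arg, ‖u‖ / ‖v‖, by positivity, ?_⟩
  have h := norm_mul_exp_arg_mul_I (v / u)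
  have hvu : (‖v / u‖ : ℂ) ≠ 0 := by simp [hu, hv]
  have he : exp ((v / u).arg * I) = (v / u) / ‖v / u‖ := by rw [eq_div_iff hvu, mul_comm, h]
  rw [he, norm_div]
  have : (‖u‖ : ℂ) ≠ 0 := by simp [hu]
  have : (‖v‖ : ℂ) ≠ 0 := by simp [hv]
  push_cast
  field_simp

lemma iterate_conj_ne_zero {u : ℂ} (hu : u ≠ 0) (m : ℕ) : (starRingEnd ℂ)^[m] u ≠ 0 :=
  ((RingHom.injective _).iterate m).ne_iff' (Function.iterate_fixed (map_zero _) m) |>.2 hu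

lemma act_epsPow (v u : ℂ) (m : ℕ) : act (epsPow v m) u = v * (starRingEnd ℂ)^[m] u := by
  have hinv : Function.Involutive (starRingEnd ℂ) := Complex.conj_conj
  rcases Nat.even_or_odd m with hm | hm
  · simp [act, epsPow, Nat.even_iff.1 hm, hinv.iterate_even hm]
  · simp [act, epsPow, Nat.odd_iff.1 hm, hinv.iterate_odd hm]

lemma Mact_hmat_apply {n : ℕ} (θ : ℝ) (a : ℕ → ℂ) (z : Fin n → ℂ) (i : Fin n) :
    Mact (hmat n θ a) z i
      = exp (θ * I) * z i + ∑ k ∈ Finset.Ioi i, a (k - i) * (starRingEnd ℂ)^[k - i] (z k) := by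
  have hterm : ∀ k, act (hmat n θ a i k) (z k)
      = (if i = k then exp (θ * I) * z k else 0)
        + (if i < k then a (k - i) * (starRingEnd ℂ)^[k - i] (z k) else 0) := by
    intro k
    rcases lt_trichotomy i k with h | rfl | h
    · simp [hmat, h.ne, Fin.lt_def.1 h, not_le.2 h, act_epsPow]
    · simp [hmat, act]
    · simp [hmat, h.ne', not_lt.2 h.le, (Fin.lt_def.1 h).not_gt, act]
  simp only [Mact, hterm, Finset.sum_add_distrib, Finset.sum_ite_eq, Finset.mem_univ, if_true,
    ← Finset.sum_filter, Finset.filter_lt_eq_Ioi]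

section
variable {n : ℕ} {θ : ℝ} {z : Fin n → ℂ} {j : Fin n}

lemma Mact_hmat_of_le (a : ℕ → ℂ) (hz : ∀ k, j < k → z k = 0) {i : Fin n} (hji : j ≤ i) :
    Mact (hmat n θ a) z i = exp (θ * I) * z i := by
  rw [Mact_hmat_apply, add_eq_left]
  refine Finset.sum_eq_zero fun k hk => ?_
  rw [hz k (hji.trans_lt (Finset.mem_Ioi.1 hk)), Function.iterate_fixed (map_zero _), mul_zero]

lemma Mact_hmat_sub_of_eq_below {a b : ℕ → ℂ} (hz : ∀ k, j < k → z k = 0) {i : Fin n}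
    (hij : i < j) (hab : ∀ m : ℕ, 0 < m → m < (j : ℕ) - i → a m = b m) :
    Mact (hmat n θ a) z i - Mact (hmat n θ b) z i
      = (a (j - i) - b (j - i)) * (starRingEnd ℂ)^[(j : ℕ) - i] (z j) := by
  simp only [Mact_hmat_apply, add_sub_add_left_eq_sub, ← Finset.sum_sub_distrib, ← sub_mul]
  refine Finset.sum_eq_single_of_mem j (Finset.mem_Ioi.2 hij) fun k hk hkj => ?_
  rcases lt_or_gt_of_ne hkj with hkj | hjk
  · have hik : (i : ℕ) < k := Fin.lt_def.1 (Finset.mem_Ioi.1 hk)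
    have hkj : (k : ℕ) < j := Fin.lt_def.1 hkj
    rw [hab _ (by omega) (by omega), sub_self, zero_mul]
  · rw [hz k hjk, Function.iterate_fixed (map_zero _), mul_zero]

end

/-- H acts transitively on each Y_{2j−1} ⊂ (ℂⁿ∖{0})/ℝ^×: any two representatives are
related by an element of H up to a nonzero real scalar. -/
theorem stmt11 (n : ℕ) (j : Fin n) (z w : Fin n → ℂ) (hz : inY j z) (hw : inY j w) :
    ∃ A ∈ Hset n, ∃ t : ℝ, t ≠ 0 ∧ Mact A z = t • w := by
  obtain ⟨hzj, hz⟩ := hz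
  obtain ⟨hwj, hw⟩ := hw
  obtain ⟨θ, t, ht, hjj⟩ := exists_exp_mul_I_mul_eq_real_mul hzj hwj
  -- unknown `d` of the triangular system is `a (d + 1)`, and equation `d` is row `j - (d + 1)`
  let row (d : ℕ) : Fin n := ⟨j - (d + 1), by omega⟩
  obtain ⟨x, hx⟩ := exists_forall_eq_of_lowerTriangular j
    (fun d x => Mact (hmat n θ (fun m => x (m - 1))) z (row d))
    (fun d => (starRingEnd ℂ)^[d + 1] (z j)) (fun d => t * w (row d))
    (fun d _ => iterate_conj_ne_zero hzj _)
    (fun d hd x x' hxx' => by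
      have hjd : (j : ℕ) - row d = d + 1 := by simp only [row]; omega
      rw [Mact_hmat_sub_of_eq_below hz (Fin.lt_def.2 (by simp only [row]; omega))
        fun m _ _ => hxx' _ (by omega), hjd, Nat.add_sub_cancel])
  refine ⟨hmat n θ (fun m => x (m - 1)), ⟨θ, _, rfl⟩, t, ht, funext fun i => ?_⟩
  rw [Pi.smul_apply, Complex.real_smul]
  rcases lt_or_ge i j with hij | hji
  · have hi : row (j - i - 1) = i := Fin.ext (by simp only [row]; omega)
    simpa only [hi] using hx (j - i - 1) (by omega)
  · rw [Mact_hmat_of_le _ hz hji]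
    rcases hji.eq_or_lt with rfl | hji
    · exact hjj
    · rw [hz i hji, hw i hji, mul_zero, mul_zero]
end
end

section
/- Let n ≥ 3 and D := conj(z_{n−2}) ∂/∂conj(z_{n−1}) + z_{n−1} ∂/∂z_n, a vector field on ℂⁿ ≅ ℝ^{2n}. For a ∈ ℂ let h₁(a) act on ℂⁿ by (h₁(a)·z)_j = z_j + a·conj(z_{j+1}) for j < n and (h₁(a)·z)_n = z_n. Then the pushforward of D under h₁(a) equals D + a(conj(z_{n−2}) − conj(a)z_{n−1} + |a|²conj(z_n)) ∂/∂z_{n−2} − a·conj(z_n) ∂/∂z_n. -/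
noncomputable section
open Complex

/-- the Wirtinger derivative ∂f/∂z_j on ℂⁿ ≅ ℝ^{2n} -/
def pz (n : ℕ) (j : Fin n) (f : (Fin n → ℂ) → ℂ) (z : Fin n → ℂ) : ℂ :=
  (fderiv ℝ f z (Pi.single j 1) - I * fderiv ℝ f z (Pi.single j I)) / 2

/-- the Wirtinger derivative ∂f/∂conj(z_j) on ℂⁿ ≅ ℝ^{2n} -/
def pzbar (n : ℕ) (j : Fin n) (f : (Fin n → ℂ) → ℂ) (z : Fin n → ℂ) : ℂ :=
  (fderiv ℝ f z (Pi.single j 1) + I * fderiv ℝ f z (Pi.single j I)) / 2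

/-- the map h₁(a) : ℂⁿ → ℂⁿ, (h₁(a)z)_j = z_j + a·conj(z_{j+1}) (last coordinate fixed) -/
def h1map (n : ℕ) (a : ℂ) (z : Fin n → ℂ) : Fin n → ℂ :=
  fun j => if h : (j : ℕ) + 1 < n then z j + a * (starRingEnd ℂ) (z ⟨(j : ℕ) + 1, h⟩) else z j


def h1lin (n : ℕ) (a : ℂ) : (Fin n → ℂ) →ₗ[ℝ] (Fin n → ℂ) where
  toFun := h1map n a
  map_add' x y := by
    funext j
    simp only [h1map, Pi.add_apply]
    split_ifs with h
    · rw [map_add]; ring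
    · rfl
  map_smul' r x := by
    funext j
    simp only [h1map, Pi.smul_apply, RingHom.id_apply, Complex.real_smul, map_mul, conj_ofReal]
    split_ifs with h
    · ring
    · rfl

def h1clm (n : ℕ) (a : ℂ) : (Fin n → ℂ) →L[ℝ] (Fin n → ℂ) :=
  (h1lin n a).toContinuousLinearMap

lemma fderiv_single_wirtinger {n : ℕ} {f : (Fin n → ℂ) → ℂ} {p : Fin n → ℂ}
    (hf : DifferentiableAt ℝ f p) (j : Fin n) (c : ℂ) :
    fderiv ℝ f p (Pi.single j c) =
      c * pz n j f p + (starRingEnd ℂ) c * pzbar n j f p := by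
  have hc : Pi.single j c
      = c.re • (Pi.single j 1 : Fin n → ℂ) + c.im • (Pi.single j I : Fin n → ℂ) := by
    funext k
    by_cases h : k = j <;>
      simp [h, Pi.single_apply, Complex.real_smul, Complex.re_add_im]
  rw [hc, map_add, map_smul, map_smul]
  have hconj : (starRingEnd ℂ) c = (c.re : ℂ) - c.im * I := by
    simp [Complex.ext_iff]
  have hce : c = (c.re : ℂ) + c.im * I := (Complex.re_add_im c).symm
  set A := fderiv ℝ f p (Pi.single j 1)
  set B := fderiv ℝ f p (Pi.single j I)
  simp only [pz, pzbar, Complex.real_smul, smul_eq_mul]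
  linear_combination (-(A - I*B)/2) * hce + (-(A+I*B)/2) * hconj + ((c.im:ℂ) * B) * Complex.I_sq

lemma h1map_single {n : ℕ} (a : ℂ) (j k : Fin n) (hk : (k:ℕ) + 1 = (j:ℕ)) (c : ℂ) :
    h1map n a (Pi.single j c) =
      Pi.single j c + Pi.single k (a * (starRingEnd ℂ) c) := by
  have hj := j.isLt
  funext m
  simp only [h1map, Pi.add_apply, Pi.single_apply]
  by_cases h : (m:ℕ) + 1 < n
  · rw [dif_pos h]
    by_cases hm : m = k
    · have hpos : (⟨(m:ℕ)+1, h⟩ : Fin n) = j := by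
        rw [Fin.ext_iff] at hm ⊢
        rw [Fin.val_mk]
        omega
      rw [if_pos hpos, if_pos hm]
    · have hneg : ¬(⟨(m:ℕ)+1, h⟩ : Fin n) = j := by
        rw [Fin.ext_iff] at hm ⊢
        rw [Fin.val_mk]
        omega
      rw [if_neg hneg, if_neg hm]
      simp
  · rw [dif_neg h]
    have hmk : m ≠ k := by
      intro he
      rw [Fin.ext_iff] at he
      omega
    rw [if_neg hmk]
    split_ifs <;> simp

lemma h1clm_apply {n : ℕ} (a : ℂ) (z : Fin n → ℂ) : h1clm n a z = h1map n a z := rfl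

lemma h1map_pair {n : ℕ} (a : ℂ) (w : Fin n → ℂ) (j k : Fin n)
    (h : (j:ℕ) + 1 = (k:ℕ)) :
    h1map n a w j = w j + a * (starRingEnd ℂ) (w k) := by
  have hlt : (j:ℕ) + 1 < n := h ▸ k.isLt
  simp only [h1map]
  rw [dif_pos hlt]
  have : (⟨(j:ℕ)+1, hlt⟩ : Fin n) = k := by
    rw [Fin.ext_iff, Fin.val_mk]; exact h
  rw [this]

lemma h1map_last {n : ℕ} (a : ℂ) (w : Fin n → ℂ) (j : Fin n)
    (h : ¬ ((j:ℕ) + 1 < n)) : h1map n a w j = w j := by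
  simp only [h1map]
  rw [dif_neg h]

set_option maxHeartbeats 1000000

/-- For D = conj(z_{n−2}) ∂/∂conj(z_{n−1}) + z_{n−1} ∂/∂z_n on ℂⁿ (n ≥ 3), the
pushforward of D under h₁(a) is
D + a(conj z_{n−2} − conj(a) z_{n−1} + |a|² conj z_n) ∂/∂z_{n−2} − a conj(z_n) ∂/∂z_n.
Equivalently (avoiding inverses): D(f ∘ h₁(a)) at w equals the claimed operator applied
to f, evaluated at h₁(a)(w). (Indices are 0-based: z_{n−2}, z_{n−1}, z_n of the paper
are coordinates n−3, n−2, n−1 here.) -/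
theorem stmt13 (n : ℕ) (hn : 3 ≤ n) (a : ℂ) (f : (Fin n → ℂ) → ℂ)
    (hf : ContDiff ℝ (⊤ : ℕ∞) f) (w : Fin n → ℂ) :
    (starRingEnd ℂ) (w ⟨n - 3, by omega⟩) * pzbar n ⟨n - 2, by omega⟩ (f ∘ h1map n a) w +
      w ⟨n - 2, by omega⟩ * pz n ⟨n - 1, by omega⟩ (f ∘ h1map n a) w =
    ((starRingEnd ℂ) ((h1map n a w) ⟨n - 3, by omega⟩) *
        pzbar n ⟨n - 2, by omega⟩ f (h1map n a w) +
      (h1map n a w) ⟨n - 2, by omega⟩ * pz n ⟨n - 1, by omega⟩ f (h1map n a w)) +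
    a * ((starRingEnd ℂ) ((h1map n a w) ⟨n - 3, by omega⟩) -
        (starRingEnd ℂ) a * (h1map n a w) ⟨n - 2, by omega⟩ +
        a * (starRingEnd ℂ) a * (starRingEnd ℂ) ((h1map n a w) ⟨n - 1, by omega⟩)) *
      pz n ⟨n - 3, by omega⟩ f (h1map n a w) -
    a * (starRingEnd ℂ) ((h1map n a w) ⟨n - 1, by omega⟩) *
      pz n ⟨n - 1, by omega⟩ f (h1map n a w) := by
  have hdf : Differentiable ℝ f := hf.differentiable (by simp)
  have hcomp : ∀ v, fderiv ℝ (f ∘ h1map n a) w v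
      = fderiv ℝ f (h1map n a w) (h1map n a v) := by
    intro v
    have hco : ⇑(h1clm n a) = h1map n a := rfl
    rw [← hco, fderiv_comp w (hdf _) (h1clm n a).differentiableAt, (h1clm n a).fderiv,
      ContinuousLinearMap.comp_apply, hco]
  set P := h1map n a w with hP
  have key : ∀ (j k : Fin n), (k:ℕ) + 1 = (j:ℕ) → ∀ c : ℂ,
      fderiv ℝ (f ∘ h1map n a) w (Pi.single j c)
        = (c * pz n j f P + (starRingEnd ℂ) c * pzbar n j f P)
          + ((a * (starRingEnd ℂ) c) * pz n k f P
            + (starRingEnd ℂ) (a * (starRingEnd ℂ) c) * pzbar n k f P) := by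
    intro j k hk c
    rw [hcomp, h1map_single a j k hk, map_add,
      fderiv_single_wirtinger (hdf P) j c, fderiv_single_wirtinger (hdf P) k _]
  have hk1 : ((⟨n-3, by omega⟩ : Fin n) : ℕ) + 1 = ((⟨n-2, by omega⟩ : Fin n) : ℕ) := by
    simp [Fin.val_mk]; omega
  have hk2 : ((⟨n-2, by omega⟩ : Fin n) : ℕ) + 1 = ((⟨n-1, by omega⟩ : Fin n) : ℕ) := by
    simp [Fin.val_mk]; omega
  have e1 : P ⟨n-3, by omega⟩ = w ⟨n-3, by omega⟩ + a * (starRingEnd ℂ) (w ⟨n-2, by omega⟩) :=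
    h1map_pair a w _ _ hk1
  have e2 : P ⟨n-2, by omega⟩ = w ⟨n-2, by omega⟩ + a * (starRingEnd ℂ) (w ⟨n-1, by omega⟩) :=
    h1map_pair a w _ _ hk2
  have e3 : P ⟨n-1, by omega⟩ = w ⟨n-1, by omega⟩ :=
    h1map_last a w _ (by simp [Fin.val_mk]; omega)
  simp only [pz, pzbar]
  rw [key _ _ hk1 1, key _ _ hk1 I, key _ _ hk2 1, key _ _ hk2 I]
  simp only [e1, e2, e3, pz, pzbar]
  simp only [map_mul, map_one, map_add, Complex.conj_I, Complex.conj_conj, mul_one, mul_neg,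
    neg_mul, map_neg]
  have hI2 : (I:ℂ)^2 = -1 := Complex.I_sq
  have hI3 : (I:ℂ)^3 = -I := by rw [pow_succ, hI2]; ring
  ring_nf
  simp only [hI2, hI3]
  ring
end
end
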